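/- (Selected-mass comparison.) Suppose Pr(Y>0|A) ≥ Pr(Y>0|B) and let π be any optimal policy (maximizer of J) for some λ ≥ 0 and admissible g. With f(y',1) = p(y'|A)·π(A,y') − p(y'|B)·π(B,y'), one has ∑_{y'} |f(y',1)| ≤ ∑_{y'} |p(y'|A) − p(y'|B)|. -/

import Mathlib

/-!
Static setting: `Y` is a finite set of nonzero real qualifications; the two groups
`A`/`B` are encoded as `true`/`false`; `p c y` is the joint pmf on group × qualification.
-/

open Finset Filter Topology
open scoped Classical

noncomputable section

/-- Marginal probability of group `c`. -/
def pG (Y : Finset ℝ) (p : Bool → ℝ → ℝ) (c : Bool) : ℝ := ∑ y ∈ Y, p c y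

/-- Conditional pmf `p(y|c)`. -/
def pCond (Y : Finset ℝ) (p : Bool → ℝ → ℝ) (c : Bool) (y : ℝ) : ℝ := p c y / pG Y p c

/-- `p` is a pmf on `{A,B} × Y`, with positive group marginals, and all
qualifications in `Y` are nonzero. -/
def IsPMF (Y : Finset ℝ) (p : Bool → ℝ → ℝ) : Prop :=
  (∀ y ∈ Y, y ≠ 0) ∧ (∀ c, ∀ y ∈ Y, 0 ≤ p c y) ∧
    (∑ c : Bool, ∑ y ∈ Y, p c y) = 1 ∧ (∀ c, 0 < pG Y p c)

/-- A policy assigns selection probabilities in `[0,1]`. -/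
def Admissible (Y : Finset ℝ) (π : Bool → ℝ → ℝ) : Prop :=
  ∀ c, ∀ y ∈ Y, 0 ≤ π c y ∧ π c y ≤ 1

/-- Institution utility `U(π) = ∑ p(c,y)·y·π(c,y)`. -/
def util (Y : Finset ℝ) (p π : Bool → ℝ → ℝ) : ℝ :=
  ∑ c : Bool, ∑ y ∈ Y, p c y * y * π c y

/-- Selection rate of group `c`. -/
def selRate (Y : Finset ℝ) (p π : Bool → ℝ → ℝ) (c : Bool) : ℝ :=
  ∑ y ∈ Y, pCond Y p c y * π c y

/-- Disparity `Δ(π)`. -/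
def disp (Y : Finset ℝ) (p π : Bool → ℝ → ℝ) : ℝ :=
  |selRate Y p π true - selRate Y p π false|

/-- Penalized objective `J(π) = U(π) − λ·g(Δ(π))`. -/
def obj (Y : Finset ℝ) (p : Bool → ℝ → ℝ) (g : ℝ → ℝ) (lam : ℝ) (π : Bool → ℝ → ℝ) : ℝ :=
  util Y p π - lam * g (disp Y p π)

/-- Optimal policy: admissible maximizer of `J`. -/
def IsOptimal (Y : Finset ℝ) (p : Bool → ℝ → ℝ) (g : ℝ → ℝ) (lam : ℝ)
    (π : Bool → ℝ → ℝ) : Prop :=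
  Admissible Y π ∧ ∀ π', Admissible Y π' → obj Y p g lam π' ≤ obj Y p g lam π

/-- `g` is nondecreasing, nonnegative, convex on `[0,∞)` with `g 0 = 0`. -/
def AdmissiblePenalty (g : ℝ → ℝ) : Prop :=
  g 0 = 0 ∧ MonotoneOn g (Set.Ici 0) ∧ ConvexOn ℝ (Set.Ici 0) g ∧
    ∀ x ∈ Set.Ici (0 : ℝ), 0 ≤ g x

/-- `Pr(Y > 0 | c)`. -/
def posRate (Y : Finset ℝ) (p : Bool → ℝ → ℝ) (c : Bool) : ℝ :=
  ∑ y ∈ Y.filter (fun y => 0 < y), pCond Y p c y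

/-- `Δ_UM = Pr(Y>0|A) − Pr(Y>0|B)`. -/
def dUM (Y : Finset ℝ) (p : Bool → ℝ → ℝ) : ℝ := posRate Y p true - posRate Y p false

/-- `E[Y₊] = ∑_{c, y>0} p(c,y)·y`, the unconstrained maximal utility. -/
def eyPos (Y : Finset ℝ) (p : Bool → ℝ → ℝ) : ℝ :=
  ∑ c : Bool, ∑ y ∈ Y.filter (fun y => 0 < y), p c y * y

/-- The index set `𝒯_e`. -/
def TE (Y : Finset ℝ) (p : Bool → ℝ → ℝ) : Finset (ℝ × Bool) :=
  (Y ×ˢ (Finset.univ : Finset Bool)).filter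
    (fun yc => (yc.2 = true ∧ 0 < yc.1 ∧ 0 < pCond Y p true yc.1) ∨
               (yc.2 = false ∧ yc.1 < 0 ∧ 0 < pCond Y p false yc.1))

/-!
Utility and the signed gap `D = S_A − S_B` are affine in the policy, and the admissible policies
form a convex set. Hence at an optimum no utility-improving policy moves the gap towards zero (a
small mixture of it with `π` would lower the disparity), and no two utility-improving policies
move it to opposite sides (some mixture of them keeps the gap at `D`).

In each group, selecting the unselected qualified mass (`shortfall`) or dropping the selected
unqualified mass (`excess`) improves utility when that mass is positive; this raises the gap for
`A`'s shortfall and `B`'s excess and lowers it for the other two. Since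
`D = Δ_UM − (shortfall A + excess B) + (excess A + shortfall B)` with `Δ_UM ≥ 0`, the lowering
slack vanishes and `D ≥ 0`. So `B` selects all its qualified mass and `A` none of its unqualified
mass, and the bound follows from `|x| = 2x⁺ − x` by comparing positive parts pointwise.
-/

lemma sum_abs_le_sum_abs_of_le_posPart {ι α : Type*} [AddCommGroup α] [LinearOrder α]
    [IsOrderedAddMonoid α] {s : Finset ι} {f g : ι → α} (hfg : ∀ i ∈ s, f i ≤ (g i)⁺)
    (hsum : ∑ i ∈ s, g i ≤ ∑ i ∈ s, f i) :
    ∑ i ∈ s, |f i| ≤ ∑ i ∈ s, |g i| := by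
  have hpos : ∑ i ∈ s, 2 • (f i)⁺ ≤ ∑ i ∈ s, 2 • (g i)⁺ :=
    sum_le_sum fun i hi => nsmul_le_nsmul_right (sup_le (hfg i hi) (posPart_nonneg _)) 2
  simp only [← abs_add_eq_two_nsmul_posPart, sum_add_distrib] at hpos
  exact le_of_add_le_add_right (hpos.trans (by gcongr))

lemma sum_mul_pos_of_sum_pos {ι R : Type*} [CommRing R] [LinearOrder R] [IsStrictOrderedRing R]
    {s : Finset ι} {w f : ι → R} (hw : ∀ i ∈ s, 0 < w i) (hf : ∀ i ∈ s, 0 ≤ f i)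
    (h : 0 < ∑ i ∈ s, f i) : 0 < ∑ i ∈ s, w i * f i := by
  obtain ⟨i, hi, hfi⟩ :=
    exists_lt_of_sum_lt (by simpa using h : ∑ i ∈ s, (0 : R) < ∑ i ∈ s, f i)
  exact sum_pos' (fun j hj => mul_nonneg (hw j hj).le (hf j hj)) ⟨i, hi, mul_pos (hw i hi) hfi⟩

lemma sum_mul_ite_sub {ι R : Type*} [CommRing R] {s : Finset ι} (q : ι → Prop)
    [DecidablePred q] (w v h : ι → R) :
    ∑ i ∈ s, w i * ((if q i then v i else h i) - h i)
      = ∑ i ∈ s.filter q, w i * (v i - h i) := by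
  rw [sum_filter]
  exact sum_congr rfl fun i _ => by split_ifs <;> ring

lemma exists_abs_add_mul_le_abs {D δ : ℝ} (h : D * δ < 0) :
    ∃ t : ℝ, 0 < t ∧ t ≤ 1 ∧ |D + t * δ| ≤ |D| := by
  have hδ : 0 < δ ^ 2 := by
    have : δ ≠ 0 := by rintro rfl; simp at h
    positivity
  set t := min 1 (-(D * δ) / δ ^ 2)
  have ht : 0 < t := lt_min one_pos (div_pos (by linarith) hδ)
  have htδ : t * δ ^ 2 ≤ -(D * δ) :=
    calc t * δ ^ 2 ≤ -(D * δ) / δ ^ 2 * δ ^ 2 := by gcongr; exact min_le_right _ _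
      _ = -(D * δ) := div_mul_cancel₀ _ hδ.ne'
  refine ⟨t, ht, min_le_left _ _, sq_le_sq.mp ?_⟩
  nlinarith [mul_le_mul_of_nonneg_left htδ ht.le, mul_pos ht (neg_pos.mpr h)]

lemma exists_mem_Icc_sub_mul_add_mul_eq_zero {x₁ x₂ : ℝ} (h : x₁ * x₂ ≤ 0) :
    ∃ s ∈ Set.Icc (0 : ℝ) 1, (1 - s) * x₁ + s * x₂ = 0 := by
  have hcont : ContinuousOn (fun s : ℝ => (1 - s) * x₁ + s * x₂) (Set.uIcc 0 1) := by fun_prop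
  have h0 : (0 : ℝ) ∈ Set.uIcc x₁ x₂ := by
    rw [Set.mem_uIcc]
    rcases le_total x₁ 0 with h₁ | h₁
    · rcases le_or_gt 0 x₂ with h₂ | h₂
      · exact Or.inl ⟨h₁, h₂⟩
      · exact Or.inr ⟨h₂.le, by nlinarith⟩
    · rcases le_or_gt x₂ 0 with h₂ | h₂
      · exact Or.inr ⟨h₂, h₁⟩
      · exact Or.inl ⟨by nlinarith, h₂.le⟩
  obtain ⟨s, hs, hs0⟩ := intermediate_value_uIcc hcont (by simpa using h0)
  exact ⟨s, by simpa [Set.uIcc_of_le zero_le_one] using hs, hs0⟩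

section Policy

variable {Y : Finset ℝ} {p : Bool → ℝ → ℝ} {g : ℝ → ℝ} {lam : ℝ}
  {π π' π₁ π₂ : Bool → ℝ → ℝ}

lemma IsPMF.pG_pos (hp : IsPMF Y p) (c : Bool) : 0 < pG Y p c :=
  hp.2.2.2 c

lemma IsPMF.pCond_nonneg (hp : IsPMF Y p) (c : Bool) {y : ℝ} (hy : y ∈ Y) :
    0 ≤ pCond Y p c y :=
  div_nonneg (hp.2.1 c y hy) (hp.pG_pos c).le

lemma IsPMF.sum_pCond (hp : IsPMF Y p) (c : Bool) : ∑ y ∈ Y, pCond Y p c y = 1 := by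
  simp only [pCond, ← sum_div]
  exact div_self (hp.pG_pos c).ne'

lemma IsPMF.pG_mul_pCond (hp : IsPMF Y p) (c : Bool) (y : ℝ) : pG Y p c * pCond Y p c y = p c y :=
  mul_div_cancel₀ _ (hp.pG_pos c).ne'

lemma util_add : util Y p (π₁ + π₂) = util Y p π₁ + util Y p π₂ := by
  simp only [util, Pi.add_apply, mul_add, sum_add_distrib]

lemma util_smul (t : ℝ) : util Y p (t • π) = t * util Y p π := by
  simp only [util, Pi.smul_apply, smul_eq_mul, mul_sum]
  exact sum_congr rfl fun _ _ => sum_congr rfl fun _ _ => by ring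

lemma selRate_add (c : Bool) :
    selRate Y p (π₁ + π₂) c = selRate Y p π₁ c + selRate Y p π₂ c := by
  simp only [selRate, Pi.add_apply, mul_add, sum_add_distrib]

lemma selRate_smul (t : ℝ) (c : Bool) : selRate Y p (t • π) c = t * selRate Y p π c := by
  simp only [selRate, Pi.smul_apply, smul_eq_mul, mul_sum]
  exact sum_congr rfl fun _ _ => by ring

lemma selRate_update_self (c : Bool) (f : ℝ → ℝ) :
    selRate Y p (Function.update π c f) c
      = selRate Y p π c + ∑ y ∈ Y, pCond Y p c y * (f y - π c y) := by
  simp only [selRate, Function.update_self, mul_sub, sum_sub_distrib]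
  ring

lemma selRate_update_of_ne {c c' : Bool} (h : c' ≠ c) (f : ℝ → ℝ) :
    selRate Y p (Function.update π c f) c' = selRate Y p π c' := by
  simp only [selRate, Function.update_of_ne h]

lemma util_update (c : Bool) (f : ℝ → ℝ) :
    util Y p (Function.update π c f) = util Y p π + ∑ y ∈ Y, p c y * y * (f y - π c y) := by
  simp only [util, Fintype.sum_bool, mul_sub, sum_sub_distrib]
  cases c
  · simp
  · simp only [Function.update_self, Function.update_of_ne Bool.false_ne_true]
    ring

lemma Admissible.update (hπ : Admissible Y π) {c : Bool} {f : ℝ → ℝ}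
    (hf : ∀ y ∈ Y, 0 ≤ f y ∧ f y ≤ 1) : Admissible Y (Function.update π c f) := by
  intro c' y hy
  rcases eq_or_ne c' c with rfl | h
  · simpa using hf y hy
  · simpa [Function.update_of_ne h] using hπ c' y hy

def selGap (Y : Finset ℝ) (p π : Bool → ℝ → ℝ) : ℝ :=
  selRate Y p π true - selRate Y p π false

lemma selGap_add : selGap Y p (π₁ + π₂) = selGap Y p π₁ + selGap Y p π₂ := by
  simp only [selGap, selRate_add]; ring

lemma selGap_smul (t : ℝ) : selGap Y p (t • π) = t * selGap Y p π := by
  simp only [selGap, selRate_smul]; ring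

lemma convex_setOf_admissible : Convex ℝ {π : Bool → ℝ → ℝ | Admissible Y π} := by
  intro π₁ h₁ π₂ h₂ a b ha hb hab c y hy
  obtain ⟨h₁0, h₁1⟩ := h₁ c y hy
  obtain ⟨h₂0, h₂1⟩ := h₂ c y hy
  simp only [Pi.add_apply, Pi.smul_apply, smul_eq_mul]
  constructor <;> nlinarith

lemma IsOptimal.abs_selGap_lt (hopt : IsOptimal Y p g lam π) (hg : MonotoneOn g (Set.Ici 0))
    (hlam : 0 ≤ lam) (hπ' : Admissible Y π') (hu : util Y p π < util Y p π') :
    |selGap Y p π| < |selGap Y p π'| := by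
  by_contra! h
  have hJ := hopt.2 π' hπ'
  have hgle : g (disp Y p π') ≤ g (disp Y p π) :=
    hg (abs_nonneg (selGap Y p π')) (abs_nonneg (selGap Y p π)) h
  unfold obj at hJ
  nlinarith [mul_le_mul_of_nonneg_left hgle hlam]

lemma IsOptimal.selGap_mul_sub_nonneg (hopt : IsOptimal Y p g lam π)
    (hg : MonotoneOn g (Set.Ici 0)) (hlam : 0 ≤ lam) (hπ' : Admissible Y π')
    (hu : util Y p π < util Y p π') :
    0 ≤ selGap Y p π * (selGap Y p π' - selGap Y p π) := by
  by_contra! h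
  obtain ⟨t, ht0, ht1, hle⟩ := exists_abs_add_mul_le_abs h
  have hadm : Admissible Y ((1 - t) • π + t • π') :=
    convex_setOf_admissible hopt.1 hπ' (sub_nonneg.mpr ht1) ht0.le (by ring)
  have hlt := hopt.abs_selGap_lt hg hlam hadm (by
    rw [util_add, util_smul, util_smul]; nlinarith)
  rw [selGap_add, selGap_smul, selGap_smul, show (1 - t) * selGap Y p π + t * selGap Y p π'
    = selGap Y p π + t * (selGap Y p π' - selGap Y p π) by ring] at hlt
  exact hlt.not_ge hle

lemma IsOptimal.sub_selGap_mul_sub_selGap_pos (hopt : IsOptimal Y p g lam π)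
    (hg : MonotoneOn g (Set.Ici 0)) (hlam : 0 ≤ lam) (h₁ : Admissible Y π₁)
    (h₂ : Admissible Y π₂) (hu₁ : util Y p π < util Y p π₁)
    (hu₂ : util Y p π < util Y p π₂) :
    0 < (selGap Y p π₁ - selGap Y p π) * (selGap Y p π₂ - selGap Y p π) := by
  by_contra! h
  obtain ⟨s, ⟨hs0, hs1⟩, hs⟩ := exists_mem_Icc_sub_mul_add_mul_eq_zero h
  have hadm : Admissible Y ((1 - s) • π₁ + s • π₂) :=
    convex_setOf_admissible h₁ h₂ (sub_nonneg.mpr hs1) hs0 (by ring)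
  have hlt := hopt.abs_selGap_lt hg hlam hadm (by
    rw [util_add, util_smul, util_smul]
    exact convex_Ioi (util Y p π) hu₁ hu₂ (sub_nonneg.mpr hs1) hs0 (by ring))
  rw [selGap_add, selGap_smul, selGap_smul, show (1 - s) * selGap Y p π₁ + s * selGap Y p π₂
    = selGap Y p π by linear_combination hs] at hlt
  exact lt_irrefl _ hlt

end Policy

section Slack

variable {Y : Finset ℝ} {p : Bool → ℝ → ℝ} {π : Bool → ℝ → ℝ}

def shortfall (Y : Finset ℝ) (p π : Bool → ℝ → ℝ) (c : Bool) : ℝ :=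
  ∑ y ∈ Y.filter (fun y => 0 < y), pCond Y p c y * (1 - π c y)

def excess (Y : Finset ℝ) (p π : Bool → ℝ → ℝ) (c : Bool) : ℝ :=
  ∑ y ∈ Y.filter (fun y => y < 0), pCond Y p c y * π c y

lemma shortfall_nonneg (hp : IsPMF Y p) (hπ : Admissible Y π) (c : Bool) :
    0 ≤ shortfall Y p π c :=
  sum_nonneg fun y hy => have hy := (mem_filter.mp hy).1
    mul_nonneg (hp.pCond_nonneg c hy) (sub_nonneg.mpr (hπ c y hy).2)

lemma excess_nonneg (hp : IsPMF Y p) (hπ : Admissible Y π) (c : Bool) : 0 ≤ excess Y p π c :=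
  sum_nonneg fun y hy => have hy := (mem_filter.mp hy).1
    mul_nonneg (hp.pCond_nonneg c hy) (hπ c y hy).1

lemma selRate_eq_posRate_sub_shortfall_add_excess (hY : ∀ y ∈ Y, y ≠ 0) (c : Bool) :
    selRate Y p π c = posRate Y p c - shortfall Y p π c + excess Y p π c := by
  have hneg : Y.filter (fun y => ¬ 0 < y) = Y.filter (fun y => y < 0) :=
    filter_congr fun y hy => by rw [not_lt, (hY y hy).le_iff_lt]
  rw [selRate, ← sum_filter_add_sum_filter_not Y (fun y => 0 < y), hneg, posRate, shortfall,
    excess, ← sum_sub_distrib]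
  congr 1
  exact sum_congr rfl fun y _ => by ring

def selectPos (π : Bool → ℝ → ℝ) (c : Bool) : Bool → ℝ → ℝ :=
  Function.update π c fun y => if 0 < y then 1 else π c y

def rejectNeg (π : Bool → ℝ → ℝ) (c : Bool) : Bool → ℝ → ℝ :=
  Function.update π c fun y => if y < 0 then 0 else π c y

lemma Admissible.selectPos (hπ : Admissible Y π) (c : Bool) : Admissible Y (selectPos π c) :=
  hπ.update fun y hy => by split_ifs <;> simp [hπ c y hy]

lemma Admissible.rejectNeg (hπ : Admissible Y π) (c : Bool) : Admissible Y (rejectNeg π c) :=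
  hπ.update fun y hy => by split_ifs <;> simp [hπ c y hy]

lemma selRate_selectPos_self (c : Bool) :
    selRate Y p (selectPos π c) c = selRate Y p π c + shortfall Y p π c := by
  rw [selectPos, selRate_update_self, sum_mul_ite_sub, shortfall]

lemma selRate_rejectNeg_self (c : Bool) :
    selRate Y p (rejectNeg π c) c = selRate Y p π c - excess Y p π c := by
  rw [rejectNeg, selRate_update_self, sum_mul_ite_sub, excess, sub_eq_add_neg, ← sum_neg_distrib]
  exact congrArg _ (sum_congr rfl fun y _ => by ring)

lemma util_lt_util_selectPos (hp : IsPMF Y p) (hπ : Admissible Y π) {c : Bool}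
    (h : 0 < shortfall Y p π c) : util Y p π < util Y p (selectPos π c) := by
  rw [selectPos, util_update, sum_mul_ite_sub, lt_add_iff_pos_right]
  have hpos := sum_mul_pos_of_sum_pos (w := fun y => pG Y p c * y)
    (fun y hy => mul_pos (hp.pG_pos c) (mem_filter.mp hy).2)
    (fun y hy => have hy := (mem_filter.mp hy).1
      mul_nonneg (hp.pCond_nonneg c hy) (sub_nonneg.mpr (hπ c y hy).2)) h
  refine hpos.trans_eq (sum_congr rfl fun y _ => ?_)
  rw [← hp.pG_mul_pCond c y]
  ring

lemma util_lt_util_rejectNeg (hp : IsPMF Y p) (hπ : Admissible Y π) {c : Bool}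
    (h : 0 < excess Y p π c) : util Y p π < util Y p (rejectNeg π c) := by
  rw [rejectNeg, util_update, sum_mul_ite_sub, lt_add_iff_pos_right]
  have hpos := sum_mul_pos_of_sum_pos (w := fun y => pG Y p c * -y)
    (fun y hy => mul_pos (hp.pG_pos c) (neg_pos.mpr (mem_filter.mp hy).2))
    (fun y hy => have hy := (mem_filter.mp hy).1
      mul_nonneg (hp.pCond_nonneg c hy) (hπ c y hy).1) h
  refine hpos.trans_eq (sum_congr rfl fun y _ => ?_)
  rw [← hp.pG_mul_pCond c y]
  ring

lemma selGap_selectPos_true :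
    selGap Y p (selectPos π true) = selGap Y p π + shortfall Y p π true := by
  rw [selGap, selRate_selectPos_self, selectPos, selRate_update_of_ne Bool.false_ne_true, selGap]
  ring

lemma selGap_selectPos_false :
    selGap Y p (selectPos π false) = selGap Y p π - shortfall Y p π false := by
  rw [selGap, selRate_selectPos_self, selectPos, selRate_update_of_ne Bool.false_ne_true.symm,
    selGap]
  ring

lemma selGap_rejectNeg_true :
    selGap Y p (rejectNeg π true) = selGap Y p π - excess Y p π true := by
  rw [selGap, selRate_rejectNeg_self, rejectNeg, selRate_update_of_ne Bool.false_ne_true, selGap]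
  ring

lemma selGap_rejectNeg_false :
    selGap Y p (rejectNeg π false) = selGap Y p π + excess Y p π false := by
  rw [selGap, selRate_rejectNeg_self, rejectNeg, selRate_update_of_ne Bool.false_ne_true.symm,
    selGap]
  ring

lemma selGap_eq_dUM_sub_add (hY : ∀ y ∈ Y, y ≠ 0) :
    selGap Y p π = dUM Y p - (shortfall Y p π true + excess Y p π false)
      + (excess Y p π true + shortfall Y p π false) := by
  rw [selGap, selRate_eq_posRate_sub_shortfall_add_excess hY,
    selRate_eq_posRate_sub_shortfall_add_excess hY, dUM]
  ring

lemma pCond_mul_eq_zero_of_excess_eq_zero (hp : IsPMF Y p) (hπ : Admissible Y π) {c : Bool}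
    (h : excess Y p π c = 0) {y : ℝ} (hy : y ∈ Y) (hneg : y < 0) :
    pCond Y p c y * π c y = 0 :=
  (sum_eq_zero_iff_of_nonneg fun y hy => have hy := (mem_filter.mp hy).1
    mul_nonneg (hp.pCond_nonneg c hy) (hπ c y hy).1).mp h y (mem_filter.mpr ⟨hy, hneg⟩)

lemma pCond_mul_eq_of_shortfall_eq_zero (hp : IsPMF Y p) (hπ : Admissible Y π) {c : Bool}
    (h : shortfall Y p π c = 0) {y : ℝ} (hy : y ∈ Y) (hpos : 0 < y) :
    pCond Y p c y * π c y = pCond Y p c y := by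
  have := (sum_eq_zero_iff_of_nonneg fun y hy => have hy := (mem_filter.mp hy).1
    mul_nonneg (hp.pCond_nonneg c hy) (sub_nonneg.mpr (hπ c y hy).2)).mp h y
    (mem_filter.mpr ⟨hy, hpos⟩)
  linear_combination -this

lemma exists_improving_up (hp : IsPMF Y p) (hπ : Admissible Y π)
    (h : 0 < shortfall Y p π true + excess Y p π false) :
    ∃ π', Admissible Y π' ∧ util Y p π < util Y p π' ∧
      selGap Y p π < selGap Y p π' := by
  rcases (shortfall_nonneg hp hπ true).lt_or_eq with hs | hs
  · exact ⟨selectPos π true, hπ.selectPos true, util_lt_util_selectPos hp hπ hs,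
      by rw [selGap_selectPos_true]; linarith⟩
  · have he : 0 < excess Y p π false := by linarith
    exact ⟨rejectNeg π false, hπ.rejectNeg false, util_lt_util_rejectNeg hp hπ he,
      by rw [selGap_rejectNeg_false]; linarith⟩

lemma exists_improving_down (hp : IsPMF Y p) (hπ : Admissible Y π)
    (h : 0 < excess Y p π true + shortfall Y p π false) :
    ∃ π', Admissible Y π' ∧ util Y p π < util Y p π' ∧
      selGap Y p π' < selGap Y p π := by
  rcases (excess_nonneg hp hπ true).lt_or_eq with he | he
  · exact ⟨rejectNeg π true, hπ.rejectNeg true, util_lt_util_rejectNeg hp hπ he,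
      by rw [selGap_rejectNeg_true]; linarith⟩
  · have hs : 0 < shortfall Y p π false := by linarith
    exact ⟨selectPos π false, hπ.selectPos false, util_lt_util_selectPos hp hπ hs,
      by rw [selGap_selectPos_false]; linarith⟩

end Slack

section Optimal

variable {Y : Finset ℝ} {p : Bool → ℝ → ℝ} {g : ℝ → ℝ} {lam : ℝ}
  {π : Bool → ℝ → ℝ}

lemma IsOptimal.excess_true_add_shortfall_false_eq_zero (hp : IsPMF Y p)
    (hadv : posRate Y p false ≤ posRate Y p true) (hopt : IsOptimal Y p g lam π)
    (hg : MonotoneOn g (Set.Ici 0)) (hlam : 0 ≤ lam) :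
    excess Y p π true + shortfall Y p π false = 0 := by
  have hπ := hopt.1
  by_contra hne
  have hdown : 0 < excess Y p π true + shortfall Y p π false :=
    (add_nonneg (excess_nonneg hp hπ true) (shortfall_nonneg hp hπ false)).lt_of_ne' hne
  obtain ⟨π₂, h₂, hu₂, hlt₂⟩ := exists_improving_down hp hπ hdown
  have hD : selGap Y p π ≤ 0 := by nlinarith [hopt.selGap_mul_sub_nonneg hg hlam h₂ hu₂]
  have hup : shortfall Y p π true + excess Y p π false = 0 := by
    by_contra hne'
    obtain ⟨π₁, h₁, hu₁, hlt₁⟩ := exists_improving_up hp hπ <|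
      (add_nonneg (shortfall_nonneg hp hπ true) (excess_nonneg hp hπ false)).lt_of_ne' hne'
    nlinarith [hopt.sub_selGap_mul_sub_selGap_pos hg hlam h₁ h₂ hu₁ hu₂]
  linarith [selGap_eq_dUM_sub_add (p := p) (π := π) hp.1,
    show 0 ≤ dUM Y p from sub_nonneg.mpr hadv]

lemma IsOptimal.selGap_nonneg (hp : IsPMF Y p) (hadv : posRate Y p false ≤ posRate Y p true)
    (hopt : IsOptimal Y p g lam π) (hg : MonotoneOn g (Set.Ici 0)) (hlam : 0 ≤ lam) :
    0 ≤ selGap Y p π := by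
  have hup₀ := add_nonneg (shortfall_nonneg hp hopt.1 true) (excess_nonneg hp hopt.1 false)
  rcases hup₀.eq_or_lt with hup | hup
  · rw [selGap_eq_dUM_sub_add hp.1, ← hup,
      hopt.excess_true_add_shortfall_false_eq_zero hp hadv hg hlam, dUM]
    linarith
  · obtain ⟨π₁, h₁, hu₁, hlt₁⟩ := exists_improving_up hp hopt.1 hup
    nlinarith [hopt.selGap_mul_sub_nonneg hg hlam h₁ hu₁]

end Optimal

/-- Selected-mass comparison. If `Pr(Y>0|A) ≥ Pr(Y>0|B)` and `π`
is optimal, then `∑_{y} |p(y|A)π(A,y) − p(y|B)π(B,y)| ≤ ∑_{y} |p(y|A) − p(y|B)|`. -/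
theorem stmt_18 (Y : Finset ℝ) (p : Bool → ℝ → ℝ) (hp : IsPMF Y p)
    (hadv : posRate Y p false ≤ posRate Y p true)
    (g : ℝ → ℝ) (hg : AdmissiblePenalty g) (lam : ℝ) (hlam : 0 ≤ lam)
    (π : Bool → ℝ → ℝ) (hopt : IsOptimal Y p g lam π) :
    ∑ y ∈ Y, |pCond Y p true y * π true y - pCond Y p false y * π false y| ≤
      ∑ y ∈ Y, |pCond Y p true y - pCond Y p false y| := by
  have hπ := hopt.1
  obtain ⟨hexcess, hshortfall⟩ := (add_eq_zero_iff_of_nonneg (excess_nonneg hp hπ true)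
    (shortfall_nonneg hp hπ false)).mp
    (hopt.excess_true_add_shortfall_false_eq_zero hp hadv hg.2.1 hlam)
  refine sum_abs_le_sum_abs_of_le_posPart (fun y hy => ?_) ?_
  · rcases (hp.1 y hy).lt_or_gt with hneg | hpos
    · rw [pCond_mul_eq_zero_of_excess_eq_zero hp hπ hexcess hy hneg, zero_sub]
      exact (neg_nonpos.mpr (mul_nonneg (hp.pCond_nonneg false hy) (hπ false y hy).1)).trans
        (posPart_nonneg _)
    · rw [pCond_mul_eq_of_shortfall_eq_zero hp hπ hshortfall hy hpos]
      calc pCond Y p true y * π true y - pCond Y p false y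
          ≤ pCond Y p true y - pCond Y p false y := by
            gcongr
            exact mul_le_of_le_one_right (hp.pCond_nonneg true hy) (hπ true y hy).2
        _ ≤ _ := le_posPart _
  · rw [sum_sub_distrib, hp.sum_pCond, hp.sum_pCond, sub_self, sum_sub_distrib]
    exact hopt.selGap_nonneg hp hadv hg.2.1 hlam
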